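/- Let Γ be a boundedly n-acyclic group, n ≥ 2. Then for every 1 ≤ i ≤ n−1, the short exact sequence of Banach spaces 0 → ker(δ^i) → ℓ∞(Γ^i) → im(δ^i) → 0 splits: there is a bounded linear projection of ℓ∞(Γ^i) onto ker(δ^i). -/

import Mathlib

set_option synthInstance.maxHeartbeats 1000000
set_option maxHeartbeats 1000000

open scoped ENNReal

universe u v

/-- `ℓ∞(S, V)`: the Banach space of bounded functions `S → V` with the sup norm. -/
noncomputable abbrev ellInfty (S : Type*) (V : Type*) [NormedAddCommGroup V] : Type _ :=
  lp (fun _ : S => V) ∞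

/-- A Banach space `X` is *injective* if for every Banach space `W`, every closed subspace
`V ⊆ W` and every bounded linear map `f : V → X`, there is a bounded linear extension of `f`
to all of `W`. -/
def IsInjectiveBanach (X : Type u) [NormedAddCommGroup X] [NormedSpace ℝ X] : Prop :=
  ∀ (W : Type v) (_ : NormedAddCommGroup W) (_ : NormedSpace ℝ W) (_ : CompleteSpace W)
    (V : Submodule ℝ W), IsClosed (V : Set W) →
      ∀ f : V →L[ℝ] X, ∃ g : W →L[ℝ] X, ∀ v : V, g v = f v
/-- The inhomogeneous coboundary operator of the bounded cochain complex of a group `Γ`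
with trivial coefficients in `V` (raw formula on arbitrary functions):
`δⁿ(f)(γ₁,…,γ_{n+1}) = f(γ₂,…,γ_{n+1}) + Σ_{i=1}^n (−1)^i f(γ₁,…,γᵢγ_{i+1},…,γ_{n+1})
  + (−1)^{n+1} f(γ₁,…,γₙ)` (here written with `0`-indexed tuples). -/
noncomputable def deltaFun (Γ : Type*) [Group Γ] {V : Type*} [AddCommGroup V] [Module ℝ V]
    (n : ℕ) (f : (Fin n → Γ) → V) : (Fin n.succ → Γ) → V :=
  fun γ =>
    f (fun j => γ j.succ)
      + ∑ i : Fin n, ((-1 : ℝ) ^ (i.1 + 1)) •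
          f (fun j => if j.1 < i.1 then γ j.castSucc
              else if j.1 = i.1 then γ j.castSucc * γ j.succ else γ j.succ)
      + ((-1 : ℝ) ^ (n + 1)) • f (fun j => γ j.castSucc)

theorem deltaFun_norm_le (Γ : Type*) [Group Γ] {V : Type*} [NormedAddCommGroup V]
    [NormedSpace ℝ V] (n : ℕ) (f : ellInfty (Fin n → Γ) V) (γ : Fin (n + 1) → Γ) :
    ‖deltaFun Γ n (f : (Fin n → Γ) → V) γ‖ ≤ (n + 2) * ‖f‖ := by
  have hb : ∀ g : Fin n → Γ, ‖(f : (Fin n → Γ) → V) g‖ ≤ ‖f‖ := fun g =>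
    lp.norm_apply_le_norm (by norm_num) f g
  have hf0 : (0 : ℝ) ≤ ‖f‖ := norm_nonneg f
  simp only [deltaFun]
  refine (norm_add₃_le).trans ?_
  have h2 : ‖∑ i : Fin n, ((-1 : ℝ) ^ (i.1 + 1)) •
      (f : (Fin n → Γ) → V) (fun j => if j.1 < i.1 then γ j.castSucc
        else if j.1 = i.1 then γ j.castSucc * γ j.succ else γ j.succ)‖ ≤ n * ‖f‖ := by
    refine (norm_sum_le _ _).trans ?_
    have key : ∀ i : Fin n, ‖((-1 : ℝ) ^ (i.1 + 1)) •
        (f : (Fin n → Γ) → V) (fun j => if j.1 < i.1 then γ j.castSucc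
          else if j.1 = i.1 then γ j.castSucc * γ j.succ else γ j.succ)‖ ≤ ‖f‖ := by
      intro i
      rw [norm_smul]
      have : |(-1 : ℝ) ^ (i.1 + 1)| = 1 := by simp
      rw [Real.norm_eq_abs, this, one_mul]
      exact hb _
    calc ∑ i : Fin n, _ ≤ ∑ _i : Fin n, ‖f‖ := Finset.sum_le_sum (fun i _ => key i)
      _ = n * ‖f‖ := by simp [Finset.sum_const, Finset.card_univ]
  have h3 : ‖((-1 : ℝ) ^ (n + 1)) •
      (f : (Fin n → Γ) → V) (fun j => γ j.castSucc)‖ ≤ ‖f‖ := by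
    rw [norm_smul]; simpa using hb _
  nlinarith [hb (fun j => γ j.succ)]

theorem deltaFun_memℓp (Γ : Type*) [Group Γ] {V : Type*} [NormedAddCommGroup V]
    [NormedSpace ℝ V] (n : ℕ) (f : ellInfty (Fin n → Γ) V) :
    Memℓp (deltaFun Γ n (f : (Fin n → Γ) → V)) ∞ := by
  apply memℓp_infty
  exact ⟨(n + 2) * ‖f‖, by rintro x ⟨γ, rfl⟩; exact deltaFun_norm_le Γ n f γ⟩

/-- The coboundary as a linear map `ℓ∞(Γⁿ, V) → ℓ∞(Γ^{n+1}, V)`. -/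
noncomputable def deltaLin (Γ : Type*) [Group Γ] (V : Type*) [NormedAddCommGroup V]
    [NormedSpace ℝ V] (n : ℕ) :
    ellInfty (Fin n → Γ) V →ₗ[ℝ] ellInfty (Fin (n + 1) → Γ) V where
  toFun f := ⟨deltaFun Γ n (f : (Fin n → Γ) → V), deltaFun_memℓp Γ n f⟩
  map_add' f g := by
    apply lp.ext
    funext γ
    simp only [deltaFun, smul_add, Finset.sum_add_distrib, lp.coeFn_add, Pi.add_apply]
    abel
  map_smul' c f := by
    apply lp.ext
    funext γ
    simp [deltaFun, smul_comm c, Finset.smul_sum, smul_add]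

/-- The coboundary as a bounded linear operator `δⁿ : ℓ∞(Γⁿ, V) → ℓ∞(Γ^{n+1}, V)`.
(For `n = 0` this is the map out of `ℓ∞(Γ⁰, V) ≅ V`, which is the zero map `δ⁰`.) -/
noncomputable def deltaL (Γ : Type*) [Group Γ] (V : Type*) [NormedAddCommGroup V]
    [NormedSpace ℝ V] (n : ℕ) :
    ellInfty (Fin n → Γ) V →L[ℝ] ellInfty (Fin (n + 1) → Γ) V :=
  LinearMap.mkContinuous (deltaLin Γ V n) (n + 2) (by
    intro f
    exact lp.norm_le_of_forall_le (by positivity) (fun γ => deltaFun_norm_le Γ n f γ))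

/-- `Γ` is boundedly `n`-acyclic: the bounded cochain complex
`0 → ℝ → ℓ∞(Γ) → ℓ∞(Γ²) → ⋯` with trivial real coefficients is exact in degrees
`1 ≤ i ≤ n`, i.e. `im (δ^{i}) = ker (δ^{i+1})` for all `i` with `i + 1 ≤ n`. -/
def BoundedlyAcyclic (Γ : Type*) [Group Γ] (n : ℕ) : Prop :=
  ∀ i : ℕ, i + 1 ≤ n →
    LinearMap.range (deltaL Γ ℝ i).toLinearMap = LinearMap.ker (deltaL Γ ℝ (i + 1)).toLinearMap

/-!
`ℓ∞(S)` is an injective Banach space (Hahn–Banach in each coordinate). Argue by induction on `i`,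
starting from `ker δ⁰ = ℓ∞(Γ⁰)`. If `ker δⁱ` has a closed complement `C`, then `δⁱ` maps `C`
bijectively onto its range, which is closed because it equals `ker δⁱ⁺¹`; by the open mapping
theorem this gives a bounded right inverse `T : im δⁱ → ℓ∞(Γⁱ)`. Extending `T` to some `T'`
on all of `ℓ∞(Γⁱ⁺¹)` by injectivity, `δⁱ ∘ T'` is a bounded projection onto `im δⁱ = ker δⁱ⁺¹`.
-/

theorem isInjectiveBanach_ellInfty (S : Type*) : IsInjectiveBanach (ellInfty S ℝ) := by
  intro W _ _ _ V _ f
  -- The uniform bound `‖f‖` on the coordinate extensions lets them assemble into `ℓ∞`.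
  have hcoord : ∀ s : S, ∃ gs : StrongDual ℝ W, (∀ v : V, gs v = f v s) ∧ ‖gs‖ ≤ ‖f‖ := by
    intro s
    let fs : StrongDual ℝ V := (lp.evalCLM ℝ (fun _ : S => ℝ) ∞ s).comp f
    have hfs : ‖fs‖ ≤ ‖f‖ := fs.opNorm_le_bound (norm_nonneg f) fun v =>
      (lp.norm_apply_le_norm ENNReal.top_ne_zero (f v) s).trans (f.le_opNorm v)
    obtain ⟨gs, hext, hnorm⟩ := exists_extension_norm_eq V fs
    exact ⟨gs, hext, hnorm ▸ hfs⟩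
  choose gs hext hnorm using hcoord
  have hbound : ∀ (w : W) (s : S), ‖gs s w‖ ≤ ‖f‖ * ‖w‖ := fun w s =>
    ((gs s).le_opNorm w).trans (by gcongr; exact hnorm s)
  let g : W →ₗ[ℝ] ellInfty S ℝ :=
    { toFun := fun w => ⟨fun s => gs s w, memℓp_infty ⟨‖f‖ * ‖w‖, by
        rintro _ ⟨s, rfl⟩; exact hbound w s⟩⟩
      map_add' := fun v w => lp.ext (funext fun s => map_add (gs s) v w)
      map_smul' := fun c w => by ext s; simp }
  refine ⟨g.mkContinuous ‖f‖ fun w => lp.norm_le_of_forall_le (by positivity) (hbound w), ?_⟩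
  intro v
  ext s
  exact hext s v

theorem ContinuousLinearMap.hasRightInverse_rangeRestrict {𝕜 : Type*}
    [NontriviallyNormedField 𝕜] {E F : Type*} [NormedAddCommGroup E] [NormedSpace 𝕜 E]
    [CompleteSpace E] [NormedAddCommGroup F] [NormedSpace 𝕜 F] [CompleteSpace F] {f : E →L[𝕜] F}
    (hker : f.ker.ClosedComplemented) (hrange : IsClosed (f.range : Set F)) :
    f.rangeRestrict.HasRightInverse := by
  obtain ⟨C, hCclosed, hC⟩ := hker.exists_isClosed_isCompl
  have : CompleteSpace C := hCclosed.completeSpace_coe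
  have : CompleteSpace f.range := hrange.completeSpace_coe
  let g : C →L[𝕜] f.range := f.rangeRestrict.comp C.subtypeL
  have hinj : g.ker = ⊥ := by
    refine LinearMap.ker_eq_bot'.2 fun c hc => Subtype.ext ?_
    exact Submodule.disjoint_def.1 hC.disjoint c (congrArg Subtype.val hc) c.2
  have hsurj : g.range = ⊤ := by
    refine LinearMap.range_eq_top.2 ?_
    rintro ⟨_, x, rfl⟩
    obtain ⟨k, hk, c, hc, rfl⟩ := Submodule.mem_sup.1 (hC.sup_eq_top ▸ Submodule.mem_top (x := x))
    refine ⟨⟨c, hc⟩, Subtype.ext ?_⟩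
    change f c = f (k + c)
    rw [map_add, show f k = 0 from hk, zero_add]
  -- open mapping theorem
  let e := ContinuousLinearEquiv.ofBijective g hinj hsurj
  exact ⟨C.subtypeL.comp (e.symm : f.range →L[𝕜] C), fun y => e.apply_symm_apply y⟩

theorem closedComplemented_range_of_isInjectiveBanach {E : Type u} {F : Type v}
    [NormedAddCommGroup E] [NormedSpace ℝ E] [CompleteSpace E]
    [NormedAddCommGroup F] [NormedSpace ℝ F] [CompleteSpace F]
    (hE : IsInjectiveBanach.{u, v} E) {f : E →L[ℝ] F}
    (hker : f.ker.ClosedComplemented) (hrange : IsClosed (f.range : Set F)) :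
    f.range.ClosedComplemented := by
  obtain ⟨T, hT⟩ := f.hasRightInverse_rangeRestrict hker hrange
  obtain ⟨g, hg⟩ := hE F _ _ ‹_› f.range hrange T
  refine ⟨f.rangeRestrict.comp g, fun y => ?_⟩
  change f.rangeRestrict (g y) = y
  rw [hg y]
  exact hT y

theorem deltaL_zero (Γ : Type*) [Group Γ] (V : Type*) [NormedAddCommGroup V] [NormedSpace ℝ V] :
    deltaL Γ V 0 = 0 := by
  ext f γ
  have harg : (fun j : Fin 0 => γ j.succ) = (fun j : Fin 0 => γ j.castSucc) :=
    funext fun j => j.elim0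
  simp [deltaL, deltaLin, LinearMap.mkContinuous_apply, deltaFun, harg]

theorem BoundedlyAcyclic.closedComplemented_ker_deltaL {Γ : Type*} [Group Γ] {n : ℕ}
    (h : BoundedlyAcyclic Γ n) :
    ∀ i ≤ n, (LinearMap.ker (deltaL Γ ℝ i).toLinearMap).ClosedComplemented
  | 0, _ => by
    rw [deltaL_zero, ContinuousLinearMap.toLinearMap_zero, LinearMap.ker_zero]
    exact Submodule.closedComplemented_top
  | i + 1, hi => by
    have hrange := (deltaL Γ ℝ (i + 1)).isClosed_ker
    rw [← h i hi] at hrange ⊢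
    exact closedComplemented_range_of_isInjectiveBanach (isInjectiveBanach_ellInfty _)
      (h.closedComplemented_ker_deltaL i (by omega)) hrange

theorem ker_delta_closedComplemented_general (Γ : Type*) [Group Γ] (n : ℕ)
    (h : BoundedlyAcyclic Γ n) :
    ∀ i : ℕ, 1 ≤ i → i + 1 ≤ n →
      (LinearMap.ker (deltaL Γ ℝ i).toLinearMap).ClosedComplemented :=
  fun i _ hi => h.closedComplemented_ker_deltaL i (by omega)

/-- Let `Γ` be a boundedly `n`-acyclic group, `n ≥ 2`. Then for every `1 ≤ i ≤ n − 1`, the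
short exact sequence `0 → ker(δ^i) → ℓ∞(Γ^i) → im(δ^i) → 0` splits: there is a bounded
linear projection of `ℓ∞(Γ^i)` onto `ker(δ^i)`. -/
theorem ker_delta_closedComplemented (Γ : Type*) [Group Γ] (n : ℕ) (hn : 2 ≤ n)
    (h : BoundedlyAcyclic Γ n) :
    ∀ i : ℕ, 1 ≤ i → i + 1 ≤ n →
      (LinearMap.ker (deltaL Γ ℝ i).toLinearMap).ClosedComplemented :=
  ker_delta_closedComplemented_general Γ n h
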